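/- arXiv:2111.09054 — 3 statements merged into one kernel-verified Lean document; each statement's English description precedes it below -/
import Mathlib

section
/- In a metric space, if C ⊆ V is any k-subset with max_{v∈V} d(v,C) ≤ 2r where r is the optimal discrete k-center radius of V, and every point of P is within OPT of V where r ≤ OPT, then sup_{p∈P} d(p,C) ≤ 3·OPT. That is, a 2-approximate k-center of the vertices gives a 3-approximation for polygon burning. -/
/-- A 2-approximate discrete `k`-center `C` of the vertex set `V` (covering `V`
within radius `2 * r`, where `r ≤ OPT` is the optimal discrete `k`-center radius)
yields a 3-approximation for polygon burning: every point of `P` is within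
`3 * OPT` of `C`. -/
theorem approx_k_center_three_approx
    {X : Type*} [MetricSpace X] (P : Set X) (V : Finset X) (hVP : ↑V ⊆ P)
    (k : ℕ) (hk : 1 ≤ k) (OPT r : ℝ)
    (hP : ∀ p ∈ P, ∃ v ∈ V, dist p v ≤ OPT)
    (hrOPT : r ≤ OPT)
    (C : Finset X) (hCV : ↑C ⊆ (V : Set X)) (hCk : C.card = k)
    (hC : ∀ v ∈ V, ∃ c ∈ C, dist v c ≤ 2 * r) :
    ∀ p ∈ P, ∃ c ∈ C, dist p c ≤ 3 * OPT := by
  intro p hp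
  obtain ⟨v, hv, hpv⟩ := hP p hp
  obtain ⟨c, hc, hvc⟩ := hC v hv
  exact ⟨c, hc, by calc dist p c ≤ dist p v + dist v c := dist_triangle p v c
    _ ≤ OPT + 2 * r := by linarith
    _ ≤ 3 * OPT := by linarith⟩
end

section
/- Subdividing an edge of a graph twice (replacing edge uv by a path u–x–y–v with two new vertices) increases the minimum vertex cover size by exactly one: G has a vertex cover of size κ if and only if the doubly-subdivided graph has a vertex cover of size κ + 1. -/
def IsVertexCover {α : Type*} (G : SimpleGraph α) (C : Finset α) : Prop :=
  ∀ a b : α, G.Adj a b → a ∈ C ∨ b ∈ C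

def doubleSubdivide {α : Type*} (G : SimpleGraph α) (u v : α) :
    SimpleGraph (α ⊕ Fin 2) :=
  SimpleGraph.fromRel (fun a b =>
    match a, b with
    | Sum.inl a, Sum.inl b => G.Adj a b ∧ ¬((a = u ∧ b = v) ∨ (a = v ∧ b = u))
    | Sum.inl a, Sum.inr i => (a = u ∧ i = 0) ∨ (a = v ∧ i = 1)
    | Sum.inr i, Sum.inr j => i ≠ j
    | Sum.inr _, Sum.inl _ => False)

/-- Subdividing an edge of a graph twice increases the minimum vertex cover size
by exactly one: `G` has a vertex cover of size at most `κ` iff the doubly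
subdivided graph has a vertex cover of size at most `κ + 1`. -/
theorem doubleSubdivide_vertexCover
    {α : Type*} (G : SimpleGraph α) (u v : α) (huv : G.Adj u v) (κ : ℕ) :
    (∃ C : Finset α, C.card ≤ κ ∧ IsVertexCover G C) ↔
    (∃ C' : Finset (α ⊕ Fin 2), C'.card ≤ κ + 1 ∧
      IsVertexCover (doubleSubdivide G u v) C') := by
  classical
  constructor
  · rintro ⟨C, hcard, hcov⟩
    rcases hcov u v huv with hu | hv
    · refine ⟨insert (Sum.inr 1) (C.image Sum.inl), ?_, ?_⟩
      · have h1 := Finset.card_insert_le (Sum.inr (1 : Fin 2)) (C.image Sum.inl)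
        have h2 := Finset.card_image_le (s := C) (f := (Sum.inl : α → α ⊕ Fin 2))
        omega
      · intro a b hab
        rw [doubleSubdivide, SimpleGraph.fromRel_adj] at hab
        obtain ⟨hne, h⟩ := hab
        rcases a with a | i <;> rcases b with b | j <;>
          simp only [Finset.mem_insert, Finset.mem_image] at * <;> simp_all
        · rcases h with ⟨hab, _⟩ | ⟨hab, _⟩
          · exact hcov a b hab
          · exact (hcov b a hab).symm
        · rcases h with ⟨rfl, rfl⟩ | ⟨rfl, rfl⟩
          · exact Or.inl hu
          · exact Or.inr rfl
        · rcases h with ⟨rfl, rfl⟩ | ⟨rfl, rfl⟩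
          · exact Or.inr hu
          · exact Or.inl rfl
        · omega
    · refine ⟨insert (Sum.inr 0) (C.image Sum.inl), ?_, ?_⟩
      · have h1 := Finset.card_insert_le (Sum.inr (0 : Fin 2)) (C.image Sum.inl)
        have h2 := Finset.card_image_le (s := C) (f := (Sum.inl : α → α ⊕ Fin 2))
        omega
      · intro a b hab
        rw [doubleSubdivide, SimpleGraph.fromRel_adj] at hab
        obtain ⟨hne, h⟩ := hab
        rcases a with a | i <;> rcases b with b | j <;>
          simp only [Finset.mem_insert, Finset.mem_image] at * <;> simp_all
        · rcases h with ⟨hab, _⟩ | ⟨hab, _⟩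
          · exact hcov a b hab
          · exact (hcov b a hab).symm
        · rcases h with ⟨rfl, rfl⟩ | ⟨rfl, rfl⟩
          · exact Or.inr rfl
          · exact Or.inl hv
        · rcases h with ⟨rfl, rfl⟩ | ⟨rfl, rfl⟩
          · exact Or.inl rfl
          · exact Or.inr hv
        · omega
  · rintro ⟨C', hcard, hcov⟩
    set C₀ : Finset α := C'.preimage Sum.inl (Sum.inl_injective.injOn) with hC₀
    have hmem : ∀ a : α, a ∈ C₀ ↔ Sum.inl a ∈ C' := fun a => Finset.mem_preimage
    have hsub : C₀.image (Sum.inl : α → α ⊕ Fin 2) ⊆ C' := by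
      intro z hz
      simp only [Finset.mem_image] at hz
      obtain ⟨a, ha, rfl⟩ := hz
      exact (hmem a).mp ha
    have hcardim : (C₀.image (Sum.inl : α → α ⊕ Fin 2)).card = C₀.card :=
      Finset.card_image_of_injective _ (Sum.inl_injective : Function.Injective (Sum.inl : α → α ⊕ Fin 2))
    have hadjxy : (doubleSubdivide G u v).Adj (Sum.inr 0) (Sum.inr 1) := by
      rw [doubleSubdivide, SimpleGraph.fromRel_adj]
      refine ⟨by simp, Or.inl (by simp)⟩
    have hcov0 : ∀ a b : α, G.Adj a b → ¬((a = u ∧ b = v) ∨ (a = v ∧ b = u)) →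
        a ∈ C₀ ∨ b ∈ C₀ := by
      intro a b hab hne
      have hadj : (doubleSubdivide G u v).Adj (Sum.inl a) (Sum.inl b) := by
        rw [doubleSubdivide, SimpleGraph.fromRel_adj]
        exact ⟨by simp [hab.ne], Or.inl ⟨hab, hne⟩⟩
      rcases hcov _ _ hadj with h | h
      · exact Or.inl ((hmem a).mpr h)
      · exact Or.inr ((hmem b).mpr h)
    by_cases h0 : Sum.inr (0 : Fin 2) ∈ C'
    · by_cases h1 : Sum.inr (1 : Fin 2) ∈ C'
      · -- both new vertices in cover: remove both, add u
        refine ⟨insert u C₀, ?_, ?_⟩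
        · have hss : insert (Sum.inr 0) (insert (Sum.inr (1:Fin 2)) (C₀.image (Sum.inl : α → α ⊕ Fin 2))) ⊆ C' := by
            intro z hz
            simp only [Finset.mem_insert] at hz
            rcases hz with rfl | rfl | hz
            · exact h0
            · exact h1
            · exact hsub hz
          have hc1 : (insert (Sum.inr (0:Fin 2)) (insert (Sum.inr (1:Fin 2)) (C₀.image (Sum.inl : α → α ⊕ Fin 2)))).card
              = C₀.card + 2 := by
            rw [Finset.card_insert_of_notMem (by simp), Finset.card_insert_of_notMem (by simp),
              hcardim]
          have := Finset.card_le_card hss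
          have hci := Finset.card_insert_le u C₀
          omega
        · intro a b hab
          by_cases hne : (a = u ∧ b = v) ∨ (a = v ∧ b = u)
          · rcases hne with ⟨rfl, rfl⟩ | ⟨rfl, rfl⟩
            · exact Or.inl (Finset.mem_insert_self _ _)
            · exact Or.inr (Finset.mem_insert_self _ _)
          · rcases hcov0 a b hab hne with h | h
            · exact Or.inl (Finset.mem_insert_of_mem h)
            · exact Or.inr (Finset.mem_insert_of_mem h)
      · -- inr 1 ∉ C', so v ∈ C₀
        have hv : v ∈ C₀ := by
          have hadj : (doubleSubdivide G u v).Adj (Sum.inl v) (Sum.inr 1) := by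
            rw [doubleSubdivide, SimpleGraph.fromRel_adj]
            exact ⟨by simp, Or.inl (by simp)⟩
          rcases hcov _ _ hadj with h | h
          · exact (hmem v).mpr h
          · exact absurd h h1
        refine ⟨C₀, ?_, ?_⟩
        · have hss : insert (Sum.inr (0:Fin 2)) (C₀.image (Sum.inl : α → α ⊕ Fin 2)) ⊆ C' := by
            intro z hz
            simp only [Finset.mem_insert] at hz
            rcases hz with rfl | hz
            · exact h0
            · exact hsub hz
          have hc1 : (insert (Sum.inr (0:Fin 2)) (C₀.image (Sum.inl : α → α ⊕ Fin 2))).card = C₀.card + 1 := by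
            rw [Finset.card_insert_of_notMem (by simp), hcardim]
          have := Finset.card_le_card hss
          omega
        · intro a b hab
          by_cases hne : (a = u ∧ b = v) ∨ (a = v ∧ b = u)
          · rcases hne with ⟨rfl, rfl⟩ | ⟨rfl, rfl⟩
            · exact Or.inr hv
            · exact Or.inl hv
          · exact hcov0 a b hab hne
    · -- inr 0 ∉ C'
      have h1 : Sum.inr (1 : Fin 2) ∈ C' := by
        rcases hcov _ _ hadjxy with h | h
        · exact absurd h h0
        · exact h
      have hu : u ∈ C₀ := by
        have hadj : (doubleSubdivide G u v).Adj (Sum.inl u) (Sum.inr 0) := by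
          rw [doubleSubdivide, SimpleGraph.fromRel_adj]
          exact ⟨by simp, Or.inl (by simp)⟩
        rcases hcov _ _ hadj with h | h
        · exact (hmem u).mpr h
        · exact absurd h h0
      refine ⟨C₀, ?_, ?_⟩
      · have hss : insert (Sum.inr (1:Fin 2)) (C₀.image (Sum.inl : α → α ⊕ Fin 2)) ⊆ C' := by
          intro z hz
          simp only [Finset.mem_insert] at hz
          rcases hz with rfl | hz
          · exact h1
          · exact hsub hz
        have hc1 : (insert (Sum.inr (1:Fin 2)) (C₀.image (Sum.inl : α → α ⊕ Fin 2))).card = C₀.card + 1 := by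
          rw [Finset.card_insert_of_notMem (by simp), hcardim]
        have := Finset.card_le_card hss
        omega
      · intro a b hab
        by_cases hne : (a = u ∧ b = v) ∨ (a = v ∧ b = u)
        · rcases hne with ⟨rfl, rfl⟩ | ⟨rfl, rfl⟩
          · exact Or.inl hu
          · exact Or.inr hu
        · exact hcov0 a b hab hne
end

section
/- Let q, r, s be non-collinear points in ℝ² and let h be the circumcenter of triangle qrs. If the angle at s (∠qsr) is obtuse, i.e. ∠qsr > π/2, then h lies on the opposite side of line qr from s. -/
open EuclideanGeometry Real

open Classical in
noncomputable def circumcenter₃ (p q r : EuclideanSpace ℝ (Fin 2)) :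
    EuclideanSpace ℝ (Fin 2) :=
  if h : AffineIndependent ℝ ![p, q, r] then
    (⟨![p, q, r], h⟩ : Affine.Simplex ℝ (EuclideanSpace ℝ (Fin 2)) 2).circumcenter
  else p

open scoped RealInnerProductSpace

private lemma aux_zero (C w A : EuclideanSpace ℝ (Fin 2)) (hC : C ≠ 0) (hw : w ≠ 0)
    (hCw : ⟪C, w⟫ = 0) (hAC : ⟪A, C⟫ = 0) (hAw : ⟪A, w⟫ = 0) : A = 0 := by
  by_contra hA
  have hli : LinearIndependent ℝ ![A, C, w] := by
    apply linearIndependent_of_ne_zero_of_inner_eq_zero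
    · intro i; fin_cases i <;> simpa
    · intro i j hij
      fin_cases i <;> fin_cases j <;>
        simp_all [real_inner_comm A C, real_inner_comm A w, real_inner_comm C w]
  have hcard := hli.fintype_card_le_finrank
  rw [Fintype.card_fin, finrank_euclideanSpace_fin] at hcard
  omega

/-- If the angle at `s` in the (non-degenerate) triangle `q s r` is obtuse, then
the circumcenter of the triangle and `s` lie strictly on opposite sides of the
line through `q` and `r`. -/
theorem circumcenter_oppSide_of_obtuse
    (q r s : EuclideanSpace ℝ (Fin 2))
    (hqrs : AffineIndependent ℝ ![q, r, s])
    (hobtuse : π / 2 < ∠ q s r) :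
    (affineSpan ℝ ({q, r} : Set (EuclideanSpace ℝ (Fin 2)))).SOppSide
      (circumcenter₃ q r s) s := by
  have hqr : q ≠ r := by
    have := hqrs.injective.ne (show (0 : Fin 3) ≠ 1 by decide)
    simpa using this
  have hqs : q ≠ s := by
    have := hqrs.injective.ne (show (0 : Fin 3) ≠ 2 by decide)
    simpa using this
  have hrs : r ≠ s := by
    have := hqrs.injective.ne (show (1 : Fin 3) ≠ 2 by decide)
    simpa using this
  set L := affineSpan ℝ ({q, r} : Set (EuclideanSpace ℝ (Fin 2))) with hL
  have hsL : s ∉ L := by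
    have himg : (![q, r, s]) '' (Set.univ \ {2}) = {q, r} := by
      ext x
      constructor
      · rintro ⟨i, hi, rfl⟩
        fin_cases i
        · simp
        · simp
        · simp at hi
      · rintro (rfl | rfl)
        · exact ⟨0, by simp, rfl⟩
        · exact ⟨1, by simp, rfl⟩
    have := hqrs.notMem_affineSpan_diff 2 Set.univ
    rw [himg] at this
    simpa using this
  rw [circumcenter₃, dif_pos hqrs]
  set T : Affine.Simplex ℝ (EuclideanSpace ℝ (Fin 2)) 2 := ⟨![q, r, s], hqrs⟩ with hT
  set h := T.circumcenter with hh
  have hdq : dist q h = T.circumradius := T.dist_circumcenter_eq_circumradius 0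
  have hdr : dist r h = T.circumradius := T.dist_circumcenter_eq_circumradius 1
  have hds : dist s h = T.circumradius := T.dist_circumcenter_eq_circumradius 2
  set m := midpoint ℝ q r with hm
  set A := h -ᵥ m with hA
  set B := s -ᵥ m with hB
  set C := q -ᵥ m with hC
  have hCval : C = (2⁻¹ : ℝ) • (q -ᵥ r) := by
    rw [hC, hm, left_vsub_midpoint, invOf_eq_inv]
  have hC0 : C ≠ 0 := by
    rw [hCval]
    exact smul_ne_zero (by norm_num) (vsub_ne_zero.2 hqr)
  have hrm : r -ᵥ m = -C := by
    rw [hCval, hm, right_vsub_midpoint, invOf_eq_inv, ← smul_neg, neg_vsub_eq_vsub_rev]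
  -- perpendicularity
  have hAC : ⟪A, C⟫ = 0 := by
    have hhq : dist h q = dist h r := by rw [dist_comm h q, dist_comm h r, hdq, hdr]
    have hp : h ∈ AffineSubspace.perpBisector q r :=
      AffineSubspace.mem_perpBisector_iff_dist_eq.mpr hhq
    rw [AffineSubspace.mem_perpBisector_iff_inner_eq_zero] at hp
    have hp' : ⟪A, r -ᵥ q⟫ = 0 := hp
    rw [hCval, real_inner_smul_right, ← neg_vsub_eq_vsub_rev r q, inner_neg_right, hp']
    ring
  -- the circumradius relation
  have hAB : 2 * ⟪A, B⟫ = ‖B‖ ^ 2 - ‖C‖ ^ 2 := by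
    have h1 : h -ᵥ s = A - B := (vsub_sub_vsub_cancel_right h s m).symm
    have h2 : h -ᵥ q = A - C := (vsub_sub_vsub_cancel_right h q m).symm
    have hd : ‖A - B‖ = ‖A - C‖ := by
      rw [← h1, ← h2, ← dist_eq_norm_vsub, ← dist_eq_norm_vsub, dist_comm h s, dist_comm h q,
        hds, hdq]
    have hd2 : ‖A - B‖ ^ 2 = ‖A - C‖ ^ 2 := by rw [hd]
    rw [norm_sub_sq_real, norm_sub_sq_real, hAC] at hd2
    linarith
  -- obtuseness gives a negative inner product
  have hobt : ⟪q -ᵥ s, r -ᵥ s⟫ < 0 := by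
    have hcos : Real.cos (∠ q s r) < 0 := by
      refine Real.cos_neg_of_pi_div_two_lt_of_lt hobtuse ?_
      have := EuclideanGeometry.angle_le_pi q s r
      linarith [Real.pi_pos]
    rw [EuclideanGeometry.angle, InnerProductGeometry.cos_angle] at hcos
    have hn : 0 < ‖q -ᵥ s‖ * ‖r -ᵥ s‖ :=
      mul_pos (norm_pos_iff.2 (vsub_ne_zero.2 hqs)) (norm_pos_iff.2 (vsub_ne_zero.2 hrs))
    by_contra hge
    push_neg at hge
    exact absurd (div_nonneg hge hn.le) (not_le.2 hcos)
  have hqsv : q -ᵥ s = C - B := (vsub_sub_vsub_cancel_right q s m).symm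
  have hrsv : r -ᵥ s = -C - B := by
    rw [← vsub_sub_vsub_cancel_right r s m, hrm, ← hB]
  have hexp : ⟪C - B, -C - B⟫ = ‖B‖ ^ 2 - ‖C‖ ^ 2 := by
    have : ⟪C - B, -C - B⟫ = ⟪B, B⟫ - ⟪C, C⟫ := by
      simp [inner_sub_left, inner_sub_right, inner_neg_right, real_inner_comm B C]
    rw [this, real_inner_self_eq_norm_sq, real_inner_self_eq_norm_sq]
  have hABneg : ⟪A, B⟫ < 0 := by
    rw [hqsv, hrsv, hexp] at hobt
    linarith
  -- decompose B
  set t' : ℝ := ⟪B, C⟫ / ‖C‖ ^ 2 with ht'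
  set w := B - t' • C with hw
  have hC2 : (‖C‖ : ℝ) ^ 2 ≠ 0 := pow_ne_zero 2 (norm_ne_zero_iff.2 hC0)
  have hwC : ⟪w, C⟫ = 0 := by
    rw [hw, inner_sub_left, real_inner_smul_left, ht', real_inner_self_eq_norm_sq,
      div_mul_cancel₀ _ hC2, sub_self]
  have hAw : ⟪A, w⟫ = ⟪A, B⟫ := by
    rw [hw, inner_sub_right, real_inner_smul_right, hAC, mul_zero, sub_zero]
  have hw0 : w ≠ 0 := by
    intro h0
    rw [h0, inner_zero_right] at hAw
    exact hABneg.ne' hAw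
  set t : ℝ := ⟪A, w⟫ / ‖w‖ ^ 2 with ht
  have htneg : t < 0 :=
    div_neg_of_neg_of_pos (by rw [hAw]; exact hABneg) (pow_pos (norm_pos_iff.2 hw0) 2)
  have hAtw : A = t • w := by
    have hz : A - t • w = 0 := by
      refine aux_zero C w (A - t • w) hC0 hw0 (by rw [real_inner_comm]; exact hwC) ?_ ?_
      · rw [inner_sub_left, real_inner_smul_left, hAC, hwC]
        ring
      · rw [inner_sub_left, real_inner_smul_left, ht, real_inner_self_eq_norm_sq,
          div_mul_cancel₀ _ (pow_ne_zero 2 (norm_ne_zero_iff.2 hw0)), sub_self]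
    exact sub_eq_zero.mp hz
  -- memberships
  have hmL : m ∈ L := by
    have : m = ((2⁻¹ : ℝ) • (r -ᵥ q)) +ᵥ q := by
      rw [hm, midpoint, AffineMap.lineMap_apply, invOf_eq_inv]
    rw [this]
    exact L.smul_vsub_vadd_mem _ (right_mem_affineSpan_pair ℝ q r)
      (left_mem_affineSpan_pair ℝ q r) (left_mem_affineSpan_pair ℝ q r)
  have hCdir : C ∈ L.direction :=
    AffineSubspace.vsub_mem_direction (left_mem_affineSpan_pair ℝ q r) hmL
  set f := (t' • C) +ᵥ m with hf
  have hfL : f ∈ L :=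
    AffineSubspace.vadd_mem_of_mem_direction (Submodule.smul_mem _ _ hCdir) hmL
  have hsf : s -ᵥ f = w := by
    rw [hf, vsub_vadd_eq_vsub_sub, ← hB, hw]
  have key := AffineSubspace.sOppSide_smul_vsub_vadd_left hsL hfL hmL htneg
  have heq : t • (s -ᵥ f) +ᵥ m = h := by
    rw [hsf, ← hAtw, hA, vsub_vadd]
  rwa [heq] at key
end
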